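/- arXiv:0903.3455 — 4 statements merged into one kernel-verified Lean document; each statement's English description precedes it below -/
import Mathlib

section
/- Let G be a group, φ an automorphism of G, and C a central subgroup of G. The map sending a coset c·L(C, φ) to the φ-twisted conjugacy class of c is a well-defined bijection between the quotient set C / L(C, φ) and the set of φ-twisted conjugacy classes of elements of C (classes taken with respect to twisted conjugacy in G). In particular, the Reidemeister number R(φ) is at least the index [C : L(C, φ)]. -/
/-! Since `c` is central, `φ x * c = c' * x` says exactly `φ x = c⁻¹ * c' * x`, so two elements of
`C` are twisted conjugate iff they lie in the same coset of `L`. Hence the kernel of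
`c ↦ [c]_φ` on `C` is the coset relation of `L`, and the map is the induced bijection from
`C ⧸ L` onto its range. -/

/-- Elements `a`, `b` are `φ`-twisted conjugate: `∃ x, φ x * a = b * x`,
equivalently `a = (φ x)⁻¹ * b * x`. -/
def TwistedConj {G : Type*} [Group G] (φ : G ≃* G) (a b : G) : Prop :=
  ∃ x : G, φ x * a = b * x

/-- Twisted conjugacy as a setoid; its quotient's cardinality is the
Reidemeister number `R(φ)`. -/
def twistedSetoid {G : Type*} [Group G] (φ : G ≃* G) : Setoid G where
  r := TwistedConj φ
  iseqv := by
    constructor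
    · intro a; exact ⟨1, by simp⟩
    · rintro a b ⟨x, hx⟩
      refine ⟨x⁻¹, ?_⟩
      rw [map_inv]
      have : b = φ x * a * x⁻¹ := by rw [hx]; group
      rw [this]; group
    · rintro a b c ⟨x, hx⟩ ⟨y, hy⟩
      refine ⟨y * x, ?_⟩
      rw [map_mul, mul_assoc, hx, ← mul_assoc, hy, mul_assoc]

theorem twistedConj_iff_of_mem_center {G : Type*} [Group G] (φ : G ≃* G) {a : G}
    (ha : a ∈ Subgroup.center G) (b : G) :
    TwistedConj φ a b ↔ ∃ x : G, φ x = a⁻¹ * b * x := by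
  have hcomm : ∀ y : G, a⁻¹ * y = y * a⁻¹ := fun y =>
    (Subgroup.mem_center_iff.mp (Subgroup.inv_mem _ ha) y).symm
  refine exists_congr fun x => ?_
  rw [mul_assoc, hcomm, eq_mul_inv_iff_mul_eq]

theorem ker_twistedClass_eq_leftRel {G : Type*} [Group G] (φ : G ≃* G) {C : Subgroup G}
    (hC : C ≤ Subgroup.center G) {L : Subgroup C}
    (hL : ∀ c : C, c ∈ L ↔ ∃ x : G, φ x = (c : G) * x) :
    Setoid.ker (fun c : C => Quotient.mk (twistedSetoid φ) (c : G)) =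
      QuotientGroup.leftRel L := by
  ext c c'
  rw [Setoid.ker_def, Quotient.eq, QuotientGroup.leftRel_apply, hL]
  exact twistedConj_iff_of_mem_center φ (hC c.2) c'

/-- the map `c • L(C,φ) ↦ [c]_φ` is a well-defined bijection from
`C ⧸ L(C, φ)` onto the set of `φ`-twisted conjugacy classes of elements of `C`;
in particular `R(φ) ≥ [C : L(C, φ)]`. -/
theorem stmt2 {G : Type*} [Group G] (φ : G ≃* G) (C : Subgroup G)
    (hC : C ≤ Subgroup.center G) (L : Subgroup C)
    (hL : ∀ c : C, c ∈ L ↔ ∃ x : G, φ x = (c : G) * x) :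
    (∃ f : C ⧸ L → {q : Quotient (twistedSetoid φ) // ∃ c : C, Quotient.mk (twistedSetoid φ) (c : G) = q},
        Function.Bijective f ∧
        ∀ c : C, (f (QuotientGroup.mk c) : Quotient (twistedSetoid φ))
          = Quotient.mk (twistedSetoid φ) (c : G)) ∧
    Cardinal.mk (C ⧸ L) ≤ Cardinal.mk (Quotient (twistedSetoid φ)) := by
  let e : C ⧸ L ≃ Set.range (fun c : C => Quotient.mk (twistedSetoid φ) (c : G)) :=
    (Quotient.congrRight (Setoid.ext_iff.1 (ker_twistedClass_eq_leftRel φ hC hL).symm)).trans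
      (Setoid.quotientKerEquivRange _)
  exact ⟨⟨e, e.bijective, fun c => rfl⟩,
    (Cardinal.mk_congr e).trans_le (Cardinal.mk_subtype_le _)⟩
end

section
/- Let G be a group, φ an automorphism of G, C a central φ-invariant subgroup, η : G → G/C the quotient map, and φ̄ the induced automorphism of G/C. If g ∈ G and c ∈ C with c = cᵢ·c' where c' ∈ L(C, φ_g) (here φ_g = φ composed with conjugation by g), then g·c is φ-twisted conjugate to g·cᵢ in G. -/
theorem TwistedConj.mul_right_of_mem_center {G : Type*} [Group G] {φ : G ≃* G} {a b z : G}
    (h : TwistedConj φ a b) (hz : z ∈ Subgroup.center G) :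
    TwistedConj φ (a * z) (b * z) := by
  obtain ⟨x, hx⟩ := h
  refine ⟨x, ?_⟩
  rw [← mul_assoc, hx, mul_assoc, Subgroup.mem_center_iff.mp hz x, mul_assoc]

theorem twistedConj_mul_of_conj_apply_eq_mul {G : Type*} [Group G] {φ : G ≃* G} {g c' x : G}
    (hx : g⁻¹ * φ x * g = c' * x) : TwistedConj φ (g * c') g := by
  have hφx : φ x = g * c' * x * g⁻¹ := by
    rw [mul_assoc g, ← hx]; group
  exact ⟨x⁻¹, by rw [map_inv, hφx]; group⟩

theorem stmt6_general {G : Type*} [Group G] (φ : G ≃* G) (C : Subgroup G)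
    (hC : C ≤ Subgroup.center G)
    (g ci c' : G) (hci : ci ∈ C)
    (hL : ∃ x : G, g⁻¹ * φ x * g = c' * x) :
    TwistedConj φ (g * (ci * c')) (g * ci) := by
  obtain ⟨x, hx⟩ := hL
  have hci_center : ci ∈ Subgroup.center G := hC hci
  rw [← Subgroup.mem_center_iff.mp hci_center c', ← mul_assoc]
  exact (twistedConj_mul_of_conj_apply_eq_mul hx).mul_right_of_mem_center hci_center

/-- with `C` central and `φ`-invariant, if `c = cᵢ * c'` with
`c' ∈ L(C, φ_g)` (`φ_g : x ↦ g⁻¹ * φ x * g`), then `g * c ∼_φ g * cᵢ`. -/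
theorem stmt6 {G : Type*} [Group G] (φ : G ≃* G) (C : Subgroup G)
    (hC : C ≤ Subgroup.center G) (hinv : ∀ c ∈ C, φ c ∈ C)
    (g ci c' : G) (hci : ci ∈ C) (hc' : c' ∈ C)
    (hL : ∃ x : G, g⁻¹ * φ x * g = c' * x) :
    TwistedConj φ (g * (ci * c')) (g * ci) :=
  stmt6_general φ C hC g ci c' hci hL
end

section
/- Let G be a group, φ an automorphism, C a central φ-invariant subgroup, and g ∈ G. If c₁, c₂ ∈ C and g·c₁ is φ-twisted conjugate to g·c₂ in G, then c₁⁻¹·c₂ ∈ L(C, φ_g), where φ_g(x) = g⁻¹·φ(x)·g. -/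
/-- The automorphism `φ_g` of the paper. -/
def MulEquiv.innerTwist {G : Type*} [Group G] (φ : G ≃* G) (g : G) : G ≃* G :=
  φ.trans (MulAut.conj g⁻¹)

@[simp]
theorem MulEquiv.innerTwist_apply {G : Type*} [Group G] (φ : G ≃* G) (g x : G) :
    φ.innerTwist g x = g⁻¹ * φ x * g := by
  simp [MulEquiv.innerTwist]

theorem twistedConj_mul_left_iff {G : Type*} [Group G] (φ : G ≃* G) (g a b : G) :
    TwistedConj φ (g * a) (g * b) ↔ TwistedConj (φ.innerTwist g) a b := by
  refine exists_congr fun x ↦ ?_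
  rw [MulEquiv.innerTwist_apply]
  simp only [mul_assoc, inv_mul_eq_iff_eq_mul]

theorem TwistedConj.exists_eq_inv_mul_mul_of_mem_center {G : Type*} [Group G] {ψ : G ≃* G}
    {a b : G} (ha : a ∈ Subgroup.center G) (h : TwistedConj ψ a b) :
    ∃ x : G, ψ x = a⁻¹ * b * x := by
  obtain ⟨x, hx⟩ := h
  refine ⟨x, ?_⟩
  rw [mul_assoc, eq_inv_mul_iff_mul_eq, ← Subgroup.mem_center_iff.mp ha, hx]

theorem stmt7_general {G : Type*} [Group G] (φ : G ≃* G) (C : Subgroup G)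
    (hC : C ≤ Subgroup.center G)
    (g c₁ c₂ : G) (h1 : c₁ ∈ C) (h2 : c₂ ∈ C)
    (h : TwistedConj φ (g * c₁) (g * c₂)) :
    c₁⁻¹ * c₂ ∈ C ∧ ∃ x : G, g⁻¹ * φ x * g = (c₁⁻¹ * c₂) * x := by
  refine ⟨mul_mem (inv_mem h1) h2, ?_⟩
  simpa only [MulEquiv.innerTwist_apply] using
    ((twistedConj_mul_left_iff φ g c₁ c₂).mp h).exists_eq_inv_mul_mul_of_mem_center (hC h1)

/-- with `C` central and `φ`-invariant, if `g * c₁ ∼_φ g * c₂`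
for `c₁, c₂ ∈ C`, then `c₁⁻¹ * c₂ ∈ L(C, φ_g)` where `φ_g x = g⁻¹ * φ x * g`. -/
theorem stmt7 {G : Type*} [Group G] (φ : G ≃* G) (C : Subgroup G)
    (hC : C ≤ Subgroup.center G) (hinv : ∀ c ∈ C, φ c ∈ C)
    (g c₁ c₂ : G) (h1 : c₁ ∈ C) (h2 : c₂ ∈ C)
    (h : TwistedConj φ (g * c₁) (g * c₂)) :
    c₁⁻¹ * c₂ ∈ C ∧ ∃ x : G, g⁻¹ * φ x * g = (c₁⁻¹ * c₂) * x :=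
  stmt7_general φ C hC g c₁ c₂ h1 h2 h
end

section
/- Let G be a group, φ an automorphism, C a central φ-invariant subgroup, and g ∈ G with image ḡ in G/C. The full preimage in G of the φ̄-twisted conjugacy class of ḡ (under G → G/C) is the disjoint union of the φ-twisted conjugacy classes of the elements g·cᵢ, where {c₁, ..., c_s} is a transversal of C with respect to L(C, φ_g) and s = [C : L(C, φ_g)]. -/
section TwistedConj

variable {G : Type*} [Group G] {φ : G ≃* G}

protected theorem TwistedConj.symm {a b : G} (h : TwistedConj φ a b) : TwistedConj φ b a :=
  (twistedSetoid φ).symm h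

protected theorem TwistedConj.trans {a b d : G} (hab : TwistedConj φ a b)
    (hbd : TwistedConj φ b d) : TwistedConj φ a d :=
  (twistedSetoid φ).trans hab hbd

theorem TwistedConj.map {H : Type*} [Group H] {ψ : H ≃* H} (π : G →* H)
    (hπ : ∀ x, ψ (π x) = π (φ x)) {a b : G} (h : TwistedConj φ a b) :
    TwistedConj ψ (π a) (π b) :=
  let ⟨x, hx⟩ := h
  ⟨π x, by rw [hπ, ← map_mul, hx, map_mul]⟩

theorem TwistedConj.exists_mem_of_mk {N : Subgroup G} [N.Normal] {φb : (G ⧸ N) ≃* (G ⧸ N)}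
    (hφb : ∀ x : G, φb x = φ x) {f g : G} (h : TwistedConj φb f g) :
    ∃ e ∈ N, TwistedConj φ f (g * e) := by
  obtain ⟨xq, hxq⟩ := h
  obtain ⟨x, rfl⟩ := QuotientGroup.mk_surjective xq
  rw [hφb, ← QuotientGroup.mk_mul, ← QuotientGroup.mk_mul, QuotientGroup.eq] at hxq
  set n := (φ x * f)⁻¹ * (g * x)
  -- `φ x * f = g * x * n⁻¹ = g * (x * n⁻¹ * x⁻¹) * x`
  refine ⟨x * n⁻¹ * x⁻¹, Subgroup.Normal.conj_mem ‹_› _ (N.inv_mem hxq) x, x, ?_⟩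
  have hn : φ x * f = g * x * n⁻¹ := by simp only [n]; group
  rw [hn]; group

theorem twistedConj_mul_mul_iff_of_mem_center {c : G} (hc : c ∈ Subgroup.center G) (g d : G) :
    TwistedConj φ (g * c) (g * d) ↔ ∃ x, g⁻¹ * φ x * g = c⁻¹ * d * x := by
  refine exists_congr fun x => ?_
  have hgc : g⁻¹ * φ x * g * c = g⁻¹ * (φ x * (g * c)) := by group
  rw [mul_assoc c⁻¹, ← (Subgroup.mem_center_iff.mp (Subgroup.inv_mem _ hc)) (d * x),
    eq_mul_inv_iff_mul_eq, hgc, inv_mul_eq_iff_eq_mul, mul_assoc]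

end TwistedConj

theorem stmt10_general {G : Type*} [Group G] (φ : G ≃* G) (C : Subgroup G) [C.Normal]
    (hC : C ≤ Subgroup.center G)
    (φb : (G ⧸ C) ≃* (G ⧸ C))
    (hφb : ∀ x : G, φb (QuotientGroup.mk x) = QuotientGroup.mk (φ x))
    (g : G) {ι : Type*} (c : ι → G) (hcC : ∀ i, c i ∈ C)
    -- `(cᵢ)` is a transversal of `C` w.r.t. `L(C, φ_g) = {e ∈ C | ∃ x, g⁻¹ * φ x * g = e * x}`:
    (htrans : ∀ d ∈ C, ∃! i : ι,
        (c i)⁻¹ * d ∈ C ∧ ∃ x : G, g⁻¹ * φ x * g = ((c i)⁻¹ * d) * x) :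
    (∀ f : G, TwistedConj φb (QuotientGroup.mk f) (QuotientGroup.mk g) ↔
        ∃ i : ι, TwistedConj φ f (g * c i)) ∧
    (∀ i j : ι, i ≠ j → ∀ f : G,
        TwistedConj φ f (g * c i) → ¬ TwistedConj φ f (g * c j)) := by
  have hmk (i : ι) : (QuotientGroup.mk (g * c i) : G ⧸ C) = QuotientGroup.mk g := by
    rw [QuotientGroup.mk_mul, (QuotientGroup.eq_one_iff _).mpr (hcC i), mul_one]
  refine ⟨fun f => ⟨fun h => ?_, fun ⟨i, hi⟩ => ?_⟩, fun i j hij f hi hj => ?_⟩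
  · obtain ⟨e, heC, hfe⟩ := TwistedConj.exists_mem_of_mk hφb h
    obtain ⟨i, ⟨-, hie⟩, -⟩ := htrans e heC
    exact ⟨i, hfe.trans
      ((twistedConj_mul_mul_iff_of_mem_center (hC (hcC i)) g e).mpr hie).symm⟩
  · simpa only [QuotientGroup.mk'_apply, hmk] using hi.map (QuotientGroup.mk' C) hφb
  · obtain ⟨k, -, huniq⟩ := htrans (c j) (hcC j)
    have hik : i = k := huniq i ⟨C.mul_mem (C.inv_mem (hcC i)) (hcC j),
      (twistedConj_mul_mul_iff_of_mem_center (hC (hcC i)) g (c j)).mp (hi.symm.trans hj)⟩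
    -- `c j` represents its own coset of `L(C, φ_g)` (take `x = 1`)
    have hjk : j = k := huniq j ⟨by simp, 1, by simp⟩
    exact hij (hik.trans hjk.symm)

/-- the full preimage in `G` of the `φ̄`-twisted conjugacy class
of `ḡ` is the disjoint union of the `φ`-twisted conjugacy classes of the
elements `g * cᵢ`, where `(cᵢ)` is a transversal of `C` w.r.t. `L(C, φ_g)`. -/
theorem stmt10 {G : Type*} [Group G] (φ : G ≃* G) (C : Subgroup G) [C.Normal]
    (hC : C ≤ Subgroup.center G) (hinv : ∀ c ∈ C, φ c ∈ C)
    (φb : (G ⧸ C) ≃* (G ⧸ C))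
    (hφb : ∀ x : G, φb (QuotientGroup.mk x) = QuotientGroup.mk (φ x))
    (g : G) {ι : Type*} (c : ι → G) (hcC : ∀ i, c i ∈ C)
    -- `(cᵢ)` is a transversal of `C` w.r.t. `L(C, φ_g) = {e ∈ C | ∃ x, g⁻¹ * φ x * g = e * x}`:
    (htrans : ∀ d ∈ C, ∃! i : ι,
        (c i)⁻¹ * d ∈ C ∧ ∃ x : G, g⁻¹ * φ x * g = ((c i)⁻¹ * d) * x) :
    (∀ f : G, TwistedConj φb (QuotientGroup.mk f) (QuotientGroup.mk g) ↔
        ∃ i : ι, TwistedConj φ f (g * c i)) ∧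
    (∀ i j : ι, i ≠ j → ∀ f : G,
        TwistedConj φ f (g * c i) → ¬ TwistedConj φ f (g * c j)) :=
  stmt10_general φ C hC φb hφb g c hcC htrans
end
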